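/- Let f and g be Morse-like functions on [0,1] such that 0 and 1 are local minimum points of both f and g. If f and g both realize the same valid chiral merge tree T, then f and g are graph-equivalent. -/

import Mathlib

open scoped Classical

/-- Chiral merge trees: binary trees with a real label at every node,
and a left/right ordering of the children of each internal node. -/
inductive CMT : Type where
  | leaf (a : ℝ) : CMT
  | node (a : ℝ) (l r : CMT) : CMT

namespace CMT

/-- The label of the root of a chiral merge tree. -/
def label : CMT → ℝ
  | leaf a => a
  | node a _ _ => a

/-- The minimum leaf label of a chiral merge tree. -/
def minLeaf : CMT → ℝ
  | leaf a => a
  | node _ l r => min (minLeaf l) (minLeaf r)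

/-- The list of all labels of nodes of a chiral merge tree. -/
def labelList : CMT → List ℝ
  | leaf a => [a]
  | node a l r => a :: (labelList l ++ labelList r)

/-- In every subtree `node a l r`, the root labels of `l` and `r` are `< a`. -/
def LocalValid : CMT → Prop
  | leaf _ => True
  | node a l r => label l < a ∧ label r < a ∧ LocalValid l ∧ LocalValid r

/-- A chiral merge tree is valid if its labels are pairwise distinct and in every
subtree `node a l r` the root labels of `l` and `r` are strictly less than `a`. -/
def Valid (T : CMT) : Prop := T.labelList.Nodup ∧ T.LocalValid

/-- The Elder barcode of a chiral merge tree: `Elder (leaf a) = {[a,∞)}`; for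
`node a l r`, with `m` the larger of the two minimum leaf labels of `l` and `r`,
the unbounded bar `[m,∞)` of `Elder l ∪ Elder r` is replaced by `[m, a)`. -/
def Elder : CMT → Set (Set ℝ)
  | leaf a => {Set.Ici a}
  | node a l r =>
      insert (Set.Ico (max (minLeaf l) (minLeaf r)) a)
        ((Elder l ∪ Elder r) \ {Set.Ici (max (minLeaf l) (minLeaf r))})

/-- The subtree of a chiral merge tree at the address `w` (a word in
`{L,R}`, encoded as `false`/`true`), if it exists. -/
def subtree? : CMT → List Bool → Option CMT
  | t, [] => some t
  | leaf _, _ :: _ => none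
  | node _ l _, false :: w => subtree? l w
  | node _ _ r, true :: w => subtree? r w

/-- The label of the node of `T` at the address `w`, if such a node exists. -/
def nodeLabel? (T : CMT) (w : List Bool) : Option ℝ := (T.subtree? w).map label

/-- `T.MemS t w` means: `w` is the address of a node `v` of `T` with label `≤ t`
whose parent, if it exists, has label `> t`.  Thus `S_T(t) = {w // T.MemS t w}`. -/
def MemS (T : CMT) (t : ℝ) (w : List Bool) : Prop :=
  (∃ a, T.nodeLabel? w = some a ∧ a ≤ t) ∧
  (∀ a, w ≠ [] → T.nodeLabel? w.dropLast = some a → t < a)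

/-- The in-order (left subtree, root, right subtree) traversal of the node
addresses of a chiral merge tree. -/
def addrList : CMT → List (List Bool)
  | leaf _ => [[]]
  | node _ l r =>
      (addrList l).map (List.cons false) ++ [[]] ++ (addrList r).map (List.cons true)

/-- The node at address `u` strictly precedes the node at address `v`
in the in-order order on the nodes of `T`. -/
def InOrderLT (T : CMT) (u v : List Bool) : Prop :=
  T.addrList.idxOf u < T.addrList.idxOf v

/-- The node at address `u` precedes or equals the node at address `v`
in the in-order order on the nodes of `T`. -/
def InOrderLE (T : CMT) (u v : List Bool) : Prop :=
  T.addrList.idxOf u ≤ T.addrList.idxOf v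

/-- The number of nodes of a chiral merge tree. -/
def numNodes : CMT → ℕ
  | leaf _ => 1
  | node _ l r => 1 + numNodes l + numNodes r

/-- The number of leaves of a chiral merge tree. -/
def numLeaves : CMT → ℕ
  | leaf _ => 1
  | node _ l r => numLeaves l + numLeaves r

/-- The set of labels of leaves of a chiral merge tree. -/
def leafLabels : CMT → Set ℝ
  | leaf a => {a}
  | node _ l r => leafLabels l ∪ leafLabels r

/-- The set of labels of internal (binary) nodes of a chiral merge tree. -/
def internalLabels : CMT → Set ℝ
  | leaf _ => ∅
  | node a l r => insert a (internalLabels l ∪ internalLabels r)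

/-- The in-order traversal list of the nodes (as subtrees) of a chiral merge tree. -/
def trav : CMT → List CMT
  | leaf a => [leaf a]
  | node a l r => trav l ++ [node a l r] ++ trav r

/-- Whether a node is a leaf. -/
def isLeaf : CMT → Prop
  | leaf _ => True
  | node _ _ _ => False

end CMT
/-- The `j`-th bar of the barcode: `I₁ = [b₁, ∞)` (index `0`) and
`I_j = [b_j, d_j)` for `j ≥ 2` (indices `≠ 0`). -/
def bar {N : ℕ} (b d : Fin N → ℝ) (j : Fin N) : Set ℝ :=
  if (j : ℕ) = 0 then Set.Ici (b j) else Set.Ico (b j) (d j)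

/-- The barcode `B = {I₁, …, I_N}` as a set of intervals. -/
def barcodeOf {N : ℕ} (b d : Fin N → ℝ) : Set (Set ℝ) := Set.range (bar b d)

/-- `μ_B(I_j)`: the number of indices `k` with `I_j` strictly contained in `I_k`. -/
noncomputable def mu {N : ℕ} (b d : Fin N → ℝ) (j : Fin N) : ℕ :=
  Nat.card {k : Fin N // bar b d j ⊂ bar b d k}
/-- The sublevel set `{x ∈ [0,1] : f x ≤ t}`. -/
def sublevel (f : ℝ → ℝ) (t : ℝ) : Set ℝ := {x | x ∈ Set.Icc (0:ℝ) 1 ∧ f x ≤ t}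

/-- The set of connected components of `A ⊆ ℝ` (maximal connected subsets). -/
def Components (A : Set ℝ) : Set (Set ℝ) := {C | ∃ x ∈ A, C = connectedComponentIn A x}

/-- The left-to-right strict order on subsets of `ℝ`:
`C` is entirely to the left of `D`. -/
def CompLT (C D : Set ℝ) : Prop := ∀ x ∈ C, ∀ y ∈ D, x < y

/-- `f` and `g` are graph-equivalent: there is an increasing homeomorphism
`φ : [0,1] → [0,1]` with `f = g ∘ φ` on `[0,1]`. -/
def GraphEquiv (f g : ℝ → ℝ) : Prop :=
  ∃ φ : ℝ → ℝ, ContinuousOn φ (Set.Icc 0 1) ∧ StrictMonoOn φ (Set.Icc 0 1) ∧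
    Set.MapsTo φ (Set.Icc 0 1) (Set.Icc 0 1) ∧
    Set.SurjOn φ (Set.Icc 0 1) (Set.Icc 0 1) ∧
    ∀ x ∈ Set.Icc (0:ℝ) 1, f x = g (φ x)

/-- `f : [0,1] → ℝ` is Morse-like: continuous, and there are
`0 = p₀ < p₁ < ⋯ < p_m = 1` such that `f` is strictly monotone on each
`[p_{i-1}, p_i]`, consecutive intervals have opposite directions of monotonicity,
and the values `f(p₀), …, f(p_m)` are pairwise distinct. -/
def MorseLike (f : ℝ → ℝ) : Prop :=
  ContinuousOn f (Set.Icc 0 1) ∧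
  ∃ (m : ℕ) (p : ℕ → ℝ), p 0 = 0 ∧ p m = 1 ∧ (∀ i < m, p i < p (i + 1)) ∧
    (∀ i < m, StrictMonoOn f (Set.Icc (p i) (p (i + 1))) ∨
      StrictAntiOn f (Set.Icc (p i) (p (i + 1)))) ∧
    (∀ i, i + 1 < m →
      (StrictMonoOn f (Set.Icc (p i) (p (i + 1))) ↔
        StrictAntiOn f (Set.Icc (p (i + 1)) (p (i + 2))))) ∧
    (∀ i j, i ≤ m → j ≤ m → i ≠ j → f (p i) ≠ f (p j))

/-- `f` realizes the barcode `B`: for all `r ≤ t`, the cardinality of the image of the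
inclusion-induced map on connected components of sublevel sets (i.e. the number of
components of `{f ≤ t}` containing some component of `{f ≤ r}`) equals the number of
intervals of `B` containing both `r` and `t`. -/
def RealizesBarcode (f : ℝ → ℝ) (B : Set (Set ℝ)) : Prop :=
  ∀ r t : ℝ, r ≤ t →
    {D | D ∈ Components (sublevel f t) ∧ ∃ C ∈ Components (sublevel f r), C ⊆ D}.ncard
      = {I | I ∈ B ∧ r ∈ I ∧ t ∈ I}.ncard

/-- `f` realizes the valid chiral merge tree `T`: for each `t` there is an
order-isomorphism `α t` from the components of `{f ≤ t}` (left-to-right order) to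
`S_T(t)` (in-order order), commuting with the inclusion-induced maps on components
and the shift maps `σ_{tr}` (which send each node to its unique ancestor in `S_T(t)`;
being an ancestor is expressed by the address being a prefix). -/
def RealizesCMT (f : ℝ → ℝ) (T : CMT) : Prop :=
  ∃ α : (t : ℝ) → {C : Set ℝ // C ∈ Components (sublevel f t)} →
      {w : List Bool // T.MemS t w},
    (∀ t : ℝ, Function.Bijective (α t)) ∧
    (∀ (t : ℝ) (C D : {C : Set ℝ // C ∈ Components (sublevel f t)}),
      CompLT C.1 D.1 ↔ T.InOrderLT (α t C).1 (α t D).1) ∧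
    (∀ r t : ℝ, r ≤ t →
      ∀ (C : {C : Set ℝ // C ∈ Components (sublevel f r)})
        (D : {C : Set ℝ // C ∈ Components (sublevel f t)}),
        C.1 ⊆ D.1 → (α t D).1 <+: (α r C).1)

/-- `f` is piecewise linear on `[0,1]`. -/
def PiecewiseLinear (f : ℝ → ℝ) : Prop :=
  ∃ (m : ℕ) (p : ℕ → ℝ), p 0 = 0 ∧ p m = 1 ∧ (∀ i < m, p i < p (i + 1)) ∧
    ∀ i < m, ∃ c e : ℝ, ∀ x ∈ Set.Icc (p i) (p (i + 1)), f x = c * x + e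
/-- The interval module `k_I` at time `t` is the `k`-vector space
`PLift (t ∈ I) → k` of functions from (proofs of) `t ∈ I` to `k`, which is
one-dimensional if `t ∈ I` and the zero space otherwise.  `intervalShift k I r t` is
its shift map `k_I(r) → k_I(t)`: the identity when `r, t ∈ I` and zero otherwise. -/
noncomputable def intervalShift (k : Type) [Field k] (I : Set ℝ) (r t : ℝ) :
    (PLift (r ∈ I) → k) →ₗ[k] (PLift (t ∈ I) → k) where
  toFun x := fun _ => if hr : r ∈ I then x ⟨hr⟩ else 0
  map_add' x y := by
    funext ht
    by_cases hr : r ∈ I <;> simp [hr]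
  map_smul' c x := by
    funext ht
    by_cases hr : r ∈ I <;> simp [hr]


/-!
Two realizations of the same tree compose to order-preserving bijections between the components
of the sublevel sets of `f` and of `g`, compatible with inclusions. A component on which the
function is constant is a single local minimum, born at its own level, and the bijections
preserve births; as they also preserve the left-to-right order, they pair the `k`-th local
minimum of `f` with the `k`-th local minimum of `g`, at the same height. The local maxima are the
levels at which neighbouring minima merge, so their heights agree too, and two Morse-like
functions with the same sequence of critical values are reparametrizations of each other, piece
by piece.
-/

open Set Topology

namespace CMT

theorem subtree?_append (T : CMT) (u v : List Bool) :
    T.subtree? (u ++ v) = (T.subtree? u).bind (·.subtree? v) := by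
  induction u generalizing T with
  | nil => simp [subtree?]
  | cons b u ih => cases T <;> cases b <;> simp [subtree?, ih]

theorem LocalValid.of_subtree? {T s : CMT} (hT : T.LocalValid) {w : List Bool}
    (hs : T.subtree? w = some s) : s.LocalValid ∧ s.label ≤ T.label := by
  induction w generalizing T with
  | nil => simp only [subtree?, Option.some.injEq] at hs; exact hs ▸ ⟨hT, le_rfl⟩
  | cons b w ih =>
    cases T with
    | leaf a => cases b <;> cases hs
    | node a l r =>
      obtain ⟨hl, hr, hvl, hvr⟩ := hT
      cases b
      · exact (ih hvl hs).imp_right fun h => h.trans hl.le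
      · exact (ih hvr hs).imp_right fun h => h.trans hr.le

theorem LocalValid.label_le_of_prefix {T s : CMT} (hT : T.LocalValid) {u v : List Bool}
    (huv : u <+: v) (hv : T.subtree? v = some s) :
    ∃ s', T.subtree? u = some s' ∧ s.label ≤ s'.label := by
  obtain ⟨w, rfl⟩ := huv
  obtain ⟨s', hu, hs⟩ := Option.bind_eq_some_iff.mp ((subtree?_append T u w).symm.trans hv)
  exact ⟨s', hu, ((hT.of_subtree? hu).1.of_subtree? hs).2⟩

/-- Labels decrease away from the root, so a root-to-leaf path meets `S_T(t)` at most once. -/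
theorem MemS.eq_of_prefix {T : CMT} (hT : T.LocalValid) {t : ℝ} {u v w : List Bool}
    (hu : T.MemS t u) (hv : T.MemS t v) (huw : u <+: w) (hvw : v <+: w) : u = v := by
  wlog hlen : u.length ≤ v.length generalizing u v
  · exact (this hv hu hvw huw (by omega)).symm
  have huv : u <+: v := List.prefix_of_prefix_length_le huw hvw hlen
  by_contra hne
  have hlt : u.length < v.length :=
    hlen.lt_of_ne fun h => hne (huv.eq_of_length h)
  have hv0 : v ≠ [] := by rintro rfl; simp at hlt
  have hu_dl : u <+: v.dropLast :=
    List.prefix_of_prefix_length_le huv (List.dropLast_prefix v) (by rw [List.length_dropLast]; omega)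
  obtain ⟨a, ha, hat⟩ := hu.1
  obtain ⟨b, hb, -⟩ := hv.1
  obtain ⟨s, hs, -⟩ := Option.map_eq_some_iff.mp hb
  obtain ⟨sp, hsp, -⟩ := hT.label_le_of_prefix (List.dropLast_prefix v) hs
  have htp : t < sp.label := hv.2 _ hv0 (by simp [nodeLabel?, hsp])
  obtain ⟨su, hsu, hle⟩ := hT.label_le_of_prefix hu_dl hsp
  have : su.label = a := by simpa [nodeLabel?, hsu] using ha
  linarith

end CMT

section Components

variable {A C : Set ℝ} {x y : ℝ}

theorem connectedComponentIn_mem_components (hx : x ∈ A) :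
    connectedComponentIn A x ∈ Components A :=
  ⟨x, hx, rfl⟩

theorem eq_connectedComponentIn_of_mem_components (hC : C ∈ Components A) (hy : y ∈ C) :
    C = connectedComponentIn A y := by
  obtain ⟨x, -, rfl⟩ := hC
  exact connectedComponentIn_eq hy

theorem nonempty_of_mem_components (hC : C ∈ Components A) : C.Nonempty := by
  obtain ⟨x, hx, rfl⟩ := hC
  exact ⟨x, mem_connectedComponentIn hx⟩

theorem subset_of_mem_components (hC : C ∈ Components A) : C ⊆ A := by
  obtain ⟨x, -, rfl⟩ := hC
  exact connectedComponentIn_subset A x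

theorem ordConnected_connectedComponentIn : (connectedComponentIn A x).OrdConnected :=
  isPreconnected_connectedComponentIn.ordConnected

theorem compLT_connectedComponentIn (hx : x ∈ A) (hxy : x < y)
    (hne : connectedComponentIn A x ≠ connectedComponentIn A y) :
    CompLT (connectedComponentIn A x) (connectedComponentIn A y) := by
  intro a ha b hb
  by_contra! hba
  rcases le_or_gt b x with hbx | hxb
  · exact hne (connectedComponentIn_eq (ordConnected_connectedComponentIn.out hb
      (mem_connectedComponentIn (connectedComponentIn_nonempty_iff.mp ⟨b, hb⟩)) ⟨hbx, hxy.le⟩)).symm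
  · exact hne ((connectedComponentIn_eq (ordConnected_connectedComponentIn.out
      (mem_connectedComponentIn hx) ha ⟨hxb.le, hba⟩)).trans (connectedComponentIn_eq hb).symm)

end Components

theorem sublevel_mono (f : ℝ → ℝ) {r t : ℝ} (hrt : r ≤ t) : sublevel f r ⊆ sublevel f t :=
  fun _ hx => ⟨hx.1, hx.2.trans hrt⟩

abbrev SublevelComp (f : ℝ → ℝ) (t : ℝ) : Type := {C : Set ℝ // C ∈ Components (sublevel f t)}

namespace SublevelComp

variable {f : ℝ → ℝ} {t x : ℝ}

def ofMem (hx : x ∈ sublevel f t) : SublevelComp f t :=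
  ⟨connectedComponentIn (sublevel f t) x, connectedComponentIn_mem_components hx⟩

theorem mem_ofMem (hx : x ∈ sublevel f t) : x ∈ (ofMem hx).1 := mem_connectedComponentIn hx

theorem eq_ofMem_iff (C : SublevelComp f t) (hx : x ∈ sublevel f t) : C = ofMem hx ↔ x ∈ C.1 :=
  ⟨fun h => h ▸ mem_ofMem hx,
    fun h => Subtype.ext (eq_connectedComponentIn_of_mem_components C.2 h)⟩

theorem eq_of_mem_of_mem {C D : SublevelComp f t} (hC : x ∈ C.1) (hD : x ∈ D.1) : C = D :=
  have hx := subset_of_mem_components C.2 hC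
  ((C.eq_ofMem_iff hx).2 hC).trans ((D.eq_ofMem_iff hx).2 hD).symm

theorem subset_ofMem_of_le {r : ℝ} (C : SublevelComp f r) (hrt : r ≤ t) (hx : x ∈ C.1) :
    C.1 ⊆ (ofMem (sublevel_mono f hrt (subset_of_mem_components C.2 hx))).1 := by
  intro y hy
  rw [eq_connectedComponentIn_of_mem_components C.2 hx] at hy
  exact connectedComponentIn_mono x (sublevel_mono f hrt) hy

end SublevelComp

structure SublevelCompEquiv (f g : ℝ → ℝ) where
  equiv : ∀ t, SublevelComp f t ≃ SublevelComp g t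
  compLT_iff : ∀ t (C D : SublevelComp f t), CompLT (equiv t C).1 (equiv t D).1 ↔ CompLT C.1 D.1
  subset : ∀ ⦃r t⦄, r ≤ t → ∀ (C : SublevelComp f r) (D : SublevelComp f t),
    C.1 ⊆ D.1 → (equiv r C).1 ⊆ (equiv t D).1

namespace SublevelCompEquiv

variable {f g : ℝ → ℝ} (Φ : SublevelCompEquiv f g)

def symm : SublevelCompEquiv g f where
  equiv t := (Φ.equiv t).symm
  compLT_iff t C D := by rw [← Φ.compLT_iff, Equiv.apply_symm_apply, Equiv.apply_symm_apply]
  subset r t hrt C D hCD := by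
    obtain ⟨x, hx⟩ := nonempty_of_mem_components ((Φ.equiv r).symm C).2
    set E := SublevelComp.ofMem
      (sublevel_mono f hrt (subset_of_mem_components ((Φ.equiv r).symm C).2 hx))
    have hCE : C.1 ⊆ (Φ.equiv t E).1 := by
      simpa using Φ.subset hrt _ E (SublevelComp.subset_ofMem_of_le _ hrt hx)
    obtain ⟨y, hy⟩ := nonempty_of_mem_components C.2
    have hE : Φ.equiv t E = D := SublevelComp.eq_of_mem_of_mem (hCE hy) (hCD hy)
    rw [← hE, Equiv.symm_apply_apply]
    exact SublevelComp.subset_ofMem_of_le _ hrt hx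

def Matches (t x y : ℝ) : Prop :=
  ∃ (hx : x ∈ sublevel f t) (hy : y ∈ sublevel g t), Φ.equiv t (.ofMem hx) = .ofMem hy

variable {Φ} {r t x x' y y' : ℝ}

theorem Matches.symm (h : Φ.Matches t x y) : Φ.symm.Matches t y x := by
  obtain ⟨hx, hy, h⟩ := h
  exact ⟨hy, hx, show (Φ.equiv t).symm _ = _ from (Equiv.symm_apply_eq _).2 h.symm⟩

theorem Matches.mono (h : Φ.Matches r x y) (hrt : r ≤ t) : Φ.Matches t x y := by
  obtain ⟨hx, hy, h⟩ := h
  refine ⟨sublevel_mono f hrt hx, sublevel_mono g hrt hy, (SublevelComp.eq_ofMem_iff _ _).2 ?_⟩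
  refine Φ.subset hrt _ _ (SublevelComp.subset_ofMem_of_le _ hrt (SublevelComp.mem_ofMem hx)) ?_
  exact h ▸ SublevelComp.mem_ofMem hy

theorem Matches.lt_of_lt (h : Φ.Matches t x y) (h' : Φ.Matches t x' y') (hxx' : x < x')
    (hne : connectedComponentIn (sublevel f t) x ≠ connectedComponentIn (sublevel f t) x') :
    y < y' := by
  obtain ⟨hx, hy, h⟩ := h
  obtain ⟨hx', hy', h'⟩ := h'
  have hlt := (Φ.compLT_iff t (.ofMem hx) (.ofMem hx')).2 (compLT_connectedComponentIn hx hxx' hne)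
  rw [h, h'] at hlt
  exact hlt y (SublevelComp.mem_ofMem hy) y' (SublevelComp.mem_ofMem hy')

theorem Matches.connectedComponentIn_eq_iff (h : Φ.Matches t x y) (h' : Φ.Matches t x' y') :
    connectedComponentIn (sublevel f t) x = connectedComponentIn (sublevel f t) x' ↔
      connectedComponentIn (sublevel g t) y = connectedComponentIn (sublevel g t) y' := by
  obtain ⟨hx, hy, h⟩ := h
  obtain ⟨hx', hy', h'⟩ := h'
  change (SublevelComp.ofMem hx).1 = (SublevelComp.ofMem hx').1 ↔
    (SublevelComp.ofMem hy).1 = (SublevelComp.ofMem hy').1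
  rw [← Subtype.ext_iff, ← Subtype.ext_iff, ← h, ← h', (Φ.equiv t).apply_eq_iff_eq]

/-- Components on which `f` is constant are born at their own level; `Φ` preserves birth. -/
theorem forall_eq_of_forall_eq (C : SublevelComp f t) (hC : ∀ z ∈ C.1, f z = t) :
    ∀ z ∈ (Φ.equiv t C).1, g z = t := by
  intro z hz
  have hzt := subset_of_mem_components (Φ.equiv t C).2 hz
  refine hzt.2.antisymm (not_lt.1 fun hlt => ?_)
  have hz' : z ∈ sublevel g (g z) := ⟨hzt.1, le_rfl⟩
  have hsub := Φ.symm.subset hlt.le (.ofMem hz') (Φ.equiv t C)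
    (SublevelComp.subset_ofMem_of_le _ hlt.le (SublevelComp.mem_ofMem hz') |>.trans
      (congrArg Subtype.val ((SublevelComp.eq_ofMem_iff _ hzt).2 hz)).symm.subset)
  obtain ⟨w, hw⟩ := nonempty_of_mem_components (Φ.symm.equiv (g z) (.ofMem hz')).2
  have hwC : w ∈ C.1 := by simpa [symm] using hsub hw
  have := (subset_of_mem_components (Φ.symm.equiv (g z) (.ofMem hz')).2 hw).2
  linarith [hC w hwC]

end SublevelCompEquiv

theorem RealizesCMT.nonempty_sublevelCompEquiv {f g : ℝ → ℝ} {T : CMT} (hT : T.LocalValid)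
    (hf : RealizesCMT f T) (hg : RealizesCMT g T) : Nonempty (SublevelCompEquiv f g) := by
  obtain ⟨α, hα, hαlt, hαsub⟩ := hf
  obtain ⟨β, hβ, hβlt, hβsub⟩ := hg
  let b t := Equiv.ofBijective (β t) (hβ t)
  refine ⟨⟨fun t => (Equiv.ofBijective (α t) (hα t)).trans (b t).symm, fun t C D => ?_,
    fun r t hrt C D hCD => ?_⟩⟩
  · simp only [Equiv.trans_apply, Equiv.ofBijective_apply]
    rw [hβlt, hαlt]
    simp only [b, Equiv.ofBijective_apply_symm_apply]
  · simp only [Equiv.trans_apply, Equiv.ofBijective_apply]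
    set C' := (b r).symm (α r C)
    obtain ⟨x, hx⟩ := nonempty_of_mem_components C'.2
    set E := SublevelComp.ofMem (sublevel_mono g hrt (subset_of_mem_components C'.2 hx))
    have hCE := SublevelComp.subset_ofMem_of_le C' hrt hx
    suffices E = (b t).symm (α t D) from this ▸ hCE
    rw [Equiv.eq_symm_apply]
    have hE := hβsub r t hrt C' E hCE
    rw [show β r C' = α r C from (b r).apply_symm_apply _] at hE
    exact Subtype.ext ((β t E).2.eq_of_prefix hT (α t D).2 hE (hαsub r t hrt C D hCD))

section LocalMin

variable {f : ℝ → ℝ} {s : Set ℝ} {a b : ℝ}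

theorem IsLocalMinOn.not_strictAntiOn_Icc (h : IsLocalMinOn f s a) (hab : a < b)
    (hs : Icc a b ⊆ s) : ¬ StrictAntiOn f (Icc a b) := by
  intro hanti
  have := left_nhdsWithin_Ioc_neBot hab
  have hev : ∀ᶠ x in 𝓝[Ioc a b] a, f a ≤ f x :=
    h.filter_mono (nhdsWithin_mono a (Ioc_subset_Icc_self.trans hs))
  obtain ⟨x, hx, hax⟩ := (hev.and self_mem_nhdsWithin).exists
  exact (hanti (left_mem_Icc.2 hab.le) (Ioc_subset_Icc_self hax) hax.1).not_ge hx

theorem IsLocalMinOn.not_strictMonoOn_Icc (h : IsLocalMinOn f s b) (hab : a < b)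
    (hs : Icc a b ⊆ s) : ¬ StrictMonoOn f (Icc a b) := by
  intro hmono
  have := right_nhdsWithin_Ico_neBot hab
  have hev : ∀ᶠ x in 𝓝[Ico a b] b, f b ≤ f x :=
    h.filter_mono (nhdsWithin_mono b (Ico_subset_Icc_self.trans hs))
  obtain ⟨x, hx, hxb⟩ := (hev.and self_mem_nhdsWithin).exists
  exact (hmono (Ico_subset_Icc_self hxb) (right_mem_Icc.2 hab.le) hxb.2).not_ge hx

end LocalMin

theorem StrictMonoOn.not_strictAntiOn_Icc {f : ℝ → ℝ} {a b : ℝ}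
    (hmono : StrictMonoOn f (Icc a b)) (hab : a < b) : ¬ StrictAntiOn f (Icc a b) := fun hanti =>
  (hmono (left_mem_Icc.2 hab.le) (right_mem_Icc.2 hab.le) hab).not_gt
    (hanti (left_mem_Icc.2 hab.le) (right_mem_Icc.2 hab.le) hab)

theorem StrictMonoOn.continuousOn_of_surjOn {φ : ℝ → ℝ} {s : Set ℝ} [s.OrdConnected]
    (hmono : StrictMonoOn φ s) (hmaps : MapsTo φ s s) (hsurj : SurjOn φ s s) :
    ContinuousOn φ s := by
  have hΦ : StrictMono (hmaps.restrict φ s s) := fun x y hxy => hmono x.2 y.2 hxy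
  have hΦs : Function.Surjective (hmaps.restrict φ s s) := fun y =>
    let ⟨x, hx, hxy⟩ := hsurj y.2
    ⟨⟨x, hx⟩, Subtype.ext hxy⟩
  rw [continuousOn_iff_continuous_domRestrict]
  exact continuous_subtype_val.comp (hΦ.orderIsoOfSurjective _ hΦs).continuous

/-- Normal form of a Morse-like function with local minima at both ends: `p i` is a local
minimum of `f` for even `i` and a local maximum for odd `i`. -/
structure MorseData (f : ℝ → ℝ) (m : ℕ) (p : ℕ → ℝ) : Prop where
  continuousOn : ContinuousOn f (Icc 0 1)
  even : Even m
  zero : p 0 = 0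
  last : p m = 1
  strictMonoOn : StrictMonoOn p (Iic m)
  inc : ∀ i < m, Even i → StrictMonoOn f (Icc (p i) (p (i + 1)))
  dec : ∀ i < m, ¬ Even i → StrictAntiOn f (Icc (p i) (p (i + 1)))
  injOn : InjOn (f ∘ p) (Iic m)

theorem MorseLike.exists_morseData {f : ℝ → ℝ} (hf : MorseLike f)
    (h0 : IsLocalMinOn f (Icc 0 1) 0) (h1 : IsLocalMinOn f (Icc 0 1) 1) :
    ∃ m p, MorseData f m p := by
  obtain ⟨hcont, m, p, hp0, hpm, hlt, hdir, halt, hdist⟩ := hf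
  have hp : StrictMonoOn p (Iic m) := strictMonoOn_Iic_of_lt_succ hlt
  obtain ⟨k, rfl⟩ : ∃ k, m = k + 1 := ⟨m - 1, by
    rcases Nat.eq_zero_or_pos m with rfl | hm
    · linarith
    · omega⟩
  have hsub : ∀ i < k + 1, Icc (p i) (p (i + 1)) ⊆ Icc 0 1 := fun i hi =>
    Icc_subset_Icc (hp0 ▸ hp.monotoneOn (Nat.zero_le _) (mem_Iic.2 hi.le) (Nat.zero_le _))
      (hpm ▸ hp.monotoneOn (mem_Iic.2 hi) (mem_Iic.2 le_rfl) hi)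
  have hparity : ∀ i < k + 1, (Even i → StrictMonoOn f (Icc (p i) (p (i + 1)))) ∧
      (¬ Even i → StrictAntiOn f (Icc (p i) (p (i + 1)))) := by
    intro i
    induction i with
    | zero =>
      refine fun hm => ⟨fun _ => (hdir 0 hm).resolve_right ?_, fun h => absurd ⟨0, rfl⟩ h⟩
      exact (hp0 ▸ h0 : IsLocalMinOn f _ (p 0)).not_strictAntiOn_Icc (hlt 0 hm) (hsub 0 hm)
    | succ i ih =>
      intro hi
      obtain ⟨ihe, iho⟩ := ih (by omega)
      refine ⟨fun he => (hdir (i + 1) hi).resolve_right fun hanti => ?_, fun ho => ?_⟩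
      · exact ((halt i hi).2 hanti).not_strictAntiOn_Icc (hlt i (by omega))
          (iho (Nat.even_add_one.1 he))
      · exact (halt i hi).1 (ihe (by simpa [Nat.even_add_one] using ho))
  have hkodd : ¬ Even k := fun he => (hpm ▸ h1 : IsLocalMinOn f _ (p (k + 1))).not_strictMonoOn_Icc
    (hlt k k.lt_succ_self) (hsub k k.lt_succ_self) ((hparity k k.lt_succ_self).1 he)
  exact ⟨k + 1, p, hcont, by simpa [Nat.even_add_one] using hkodd, hp0, hpm, hp,
    fun i hi => (hparity i hi).1, fun i hi => (hparity i hi).2,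
    fun i hi j hj h => by_contra fun hij => hdist i j hi hj hij h⟩

namespace MorseData

variable {f g : ℝ → ℝ} {m : ℕ} {p q : ℕ → ℝ} {i j : ℕ} {t x : ℝ}

theorem lt (hF : MorseData f m p) (hij : i < j) (hj : j ≤ m) : p i < p j :=
  hF.strictMonoOn (mem_Iic.2 (hij.le.trans hj)) (mem_Iic.2 hj) hij

theorem Icc_subset (hF : MorseData f m p) (hi : i ≤ m) (hj : j ≤ m) : Icc (p i) (p j) ⊆ Icc 0 1 :=
  Icc_subset_Icc (hF.zero ▸ hF.strictMonoOn.monotoneOn (Nat.zero_le m) (mem_Iic.2 hi) i.zero_le)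
    (hF.last ▸ hF.strictMonoOn.monotoneOn (mem_Iic.2 hj) (mem_Iic.2 le_rfl) hj)

theorem mem_Icc (hF : MorseData f m p) (hi : i ≤ m) : p i ∈ Icc (0 : ℝ) 1 :=
  hF.Icc_subset hi hi (left_mem_Icc.2 le_rfl)

theorem exists_mem_piece (hF : MorseData f m p) (hx : x ∈ Icc (0 : ℝ) 1) :
    ∃ i < m, x ∈ Icc (p i) (p (i + 1)) := by
  have hm : 0 < m := Nat.pos_of_ne_zero fun h => zero_ne_one (hF.zero.symm.trans (h ▸ hF.last))
  have hm1 : x ≤ p (m - 1 + 1) := by rw [Nat.sub_add_cancel hm, hF.last]; exact hx.2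
  have hex : ∃ i, x ≤ p (i + 1) := ⟨m - 1, hm1⟩
  refine ⟨Nat.find hex, (Nat.find_min' hex hm1).trans_lt (by omega), ?_, Nat.find_spec hex⟩
  rcases h : Nat.find hex with _ | k
  · exact hF.zero ▸ hx.1
  · exact (not_le.1 (Nat.find_min hex (h ▸ k.lt_succ_self))).le

theorem injOn_piece (hF : MorseData f m p) (hi : i < m) : InjOn f (Icc (p i) (p (i + 1))) := by
  by_cases he : Even i
  · exact (hF.inc i hi he).injOn
  · exact (hF.dec i hi he).injOn

theorem left_mem_piece (hF : MorseData f m p) (hi : i < m) : p i ∈ Icc (p i) (p (i + 1)) :=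
  left_mem_Icc.2 (hF.lt i.lt_succ_self hi).le

theorem right_mem_piece (hF : MorseData f m p) (hi : i < m) : p (i + 1) ∈ Icc (p i) (p (i + 1)) :=
  right_mem_Icc.2 (hF.lt i.lt_succ_self hi).le

theorem connectedComponentIn_min (hF : MorseData f m p) (hi : i ≤ m) (he : Even i) :
    connectedComponentIn (sublevel f (f (p i))) (p i) = {p i} := by
  have hpi : p i ∈ sublevel f (f (p i)) := ⟨hF.mem_Icc hi, le_rfl⟩
  refine subset_antisymm (fun x hx => ?_) (singleton_subset_iff.2 (mem_connectedComponentIn hpi))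
  have hxs := connectedComponentIn_subset _ _ hx
  have hmem : ∀ z ∈ uIcc x (p i), f z ≤ f (p i) := fun z hz =>
    (connectedComponentIn_subset _ _ (ordConnected_connectedComponentIn.uIcc_subset hx
      (mem_connectedComponentIn hpi) hz)).2
  rcases lt_trichotomy x (p i) with hlt | heq | hgt
  · obtain ⟨k, rfl⟩ : ∃ k, i = k + 1 := ⟨i - 1, by
      have : i ≠ 0 := by rintro rfl; exact absurd hxs.1.1 (not_le.2 (hF.zero ▸ hlt))
      omega⟩
    set z := max x (p k)
    have hzk : z ∈ Icc (p k) (p (k + 1)) :=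
      ⟨le_max_right _ _, max_le hlt.le (hF.lt k.lt_succ_self hi).le⟩
    have hzlt : z < p (k + 1) := max_lt hlt (hF.lt k.lt_succ_self hi)
    refine absurd (hmem z (uIcc_of_le hlt.le ▸ ⟨le_max_left _ _, hzlt.le⟩))
      (not_le.2 (hF.dec k (by omega) (by simpa [Nat.even_add_one] using he) hzk
        (hF.right_mem_piece (by omega)) hzlt))
  · exact heq
  · have him : i < m := hi.lt_of_ne (by rintro rfl; exact absurd hxs.1.2 (not_le.2 (hF.last ▸ hgt)))
    set z := min x (p (i + 1))
    have hzi : z ∈ Icc (p i) (p (i + 1)) :=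
      ⟨le_min hgt.le (hF.lt i.lt_succ_self him).le, min_le_right _ _⟩
    have hzgt : p i < z := lt_min hgt (hF.lt i.lt_succ_self him)
    refine absurd (hmem z (uIcc_of_ge hgt.le ▸ ⟨hzgt.le, min_le_left _ _⟩))
      (not_le.2 (hF.inc i him he (hF.left_mem_piece him) hzi hzgt))

theorem exists_eq_singleton_of_forall_eq (hF : MorseData f m p) {C : Set ℝ}
    (hC : C ∈ Components (sublevel f t)) (hfC : ∀ z ∈ C, f z = t) :
    ∃ j ≤ m, Even j ∧ C = {p j} := by
  obtain ⟨y, hy⟩ := nonempty_of_mem_components hC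
  have hCy := eq_connectedComponentIn_of_mem_components hC hy
  have hfy := hfC y hy
  have hIcc : ∀ a b, y ∈ Icc a b → Icc a b ⊆ sublevel f t → f a = t ∧ f b = t :=
    fun a b hyab hs => have h := hCy ▸ isPreconnected_Icc.subset_connectedComponentIn hyab hs
      ⟨hfC a (h (left_mem_Icc.2 (hyab.1.trans hyab.2))),
        hfC b (h (right_mem_Icc.2 (hyab.1.trans hyab.2)))⟩
  obtain ⟨j, hj, hje, rfl⟩ : ∃ j ≤ m, Even j ∧ p j = y := by
    obtain ⟨i, hi, hyi⟩ := hF.exists_mem_piece (subset_of_mem_components hC hy).1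
    by_cases he : Even i
    · have hs : Icc (p i) y ⊆ sublevel f t := fun z hz =>
        ⟨hF.Icc_subset hi.le hi ⟨hz.1, hz.2.trans hyi.2⟩,
          hfy ▸ (hF.inc i hi he).monotoneOn ⟨hz.1, hz.2.trans hyi.2⟩ hyi hz.2⟩
      exact ⟨i, hi.le, he, hF.injOn_piece hi (hF.left_mem_piece hi) hyi
        ((hIcc _ _ ⟨hyi.1, le_rfl⟩ hs).1.trans hfy.symm)⟩
    · have hs : Icc y (p (i + 1)) ⊆ sublevel f t := fun z hz =>
        ⟨hF.Icc_subset hi.le hi ⟨hyi.1.trans hz.1, hz.2⟩,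
          hfy ▸ (hF.dec i hi he).antitoneOn hyi ⟨hyi.1.trans hz.1, hz.2⟩ hz.1⟩
      exact ⟨i + 1, hi, by simpa [Nat.even_add_one] using he,
        hF.injOn_piece hi (hF.right_mem_piece hi) hyi
          ((hIcc _ _ ⟨le_rfl, hyi.2⟩ hs).2.trans hfy.symm)⟩
  subst hfy
  exact ⟨j, hj, hje, hCy.trans (hF.connectedComponentIn_min hj hje)⟩

theorem apply_lt_apply_succ (hF : MorseData f m p) (hi : i < m) (he : Even i) :
    f (p i) < f (p (i + 1)) :=
  hF.inc i hi he (hF.left_mem_piece hi) (hF.right_mem_piece hi) (hF.lt i.lt_succ_self hi)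

theorem apply_succ_lt_apply (hF : MorseData f m p) (hi : i < m) (ho : ¬ Even i) :
    f (p (i + 1)) < f (p i) :=
  hF.dec i hi ho (hF.left_mem_piece hi) (hF.right_mem_piece hi) (hF.lt i.lt_succ_self hi)

theorem connectedComponentIn_eq_of_max (hF : MorseData f m p) (hi : i + 2 ≤ m) (he : Even i)
    (ht : f (p (i + 1)) ≤ t) :
    connectedComponentIn (sublevel f t) (p i) =
      connectedComponentIn (sublevel f t) (p (i + 2)) := by
  have hsub : Icc (p i) (p (i + 2)) ⊆ sublevel f t := by
    refine fun x hx => ⟨hF.Icc_subset (by omega) hi hx, le_trans ?_ ht⟩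
    rcases le_total x (p (i + 1)) with hle | hge
    · exact (hF.inc i (by omega) he).monotoneOn ⟨hx.1, hle⟩ (hF.right_mem_piece (by omega)) hle
    · exact (hF.dec (i + 1) (by omega) (by simpa [Nat.even_add_one] using he)).antitoneOn
        (hF.left_mem_piece (by omega)) ⟨hge, hx.2⟩ hge
  exact connectedComponentIn_eq (isPreconnected_Icc.subset_connectedComponentIn
    (left_mem_Icc.2 (hF.lt (by omega) hi).le) hsub (right_mem_Icc.2 (hF.lt (by omega) hi).le))

def Partner (f g : ℝ → ℝ) (m : ℕ) (p q : ℕ → ℝ) (x y : ℝ) : Prop :=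
  ∃ i < m, x ∈ Icc (p i) (p (i + 1)) ∧ y ∈ Icc (q i) (q (i + 1)) ∧ f x = g y

theorem partner_comm {x y : ℝ} : Partner f g m p q x y ↔ Partner g f m q p y x := by
  simp only [Partner, eq_comm (a := f x)]
  exact exists_congr fun i => and_congr_right fun _ => by tauto

theorem exists_partner (hF : MorseData f m p) (hG : MorseData g m q)
    (hv : ∀ i ≤ m, f (p i) = g (q i)) {x : ℝ} (hx : x ∈ Icc (0 : ℝ) 1) :
    ∃ y, Partner f g m p q x y := by
  obtain ⟨i, hi, hxi⟩ := hF.exists_mem_piece hx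
  have hgc : ContinuousOn g (Icc (q i) (q (i + 1))) := hG.continuousOn.mono (hG.Icc_subset hi.le hi)
  have hq := (hG.lt i.lt_succ_self hi).le
  by_cases he : Even i
  · have hfx : f x ∈ Icc (g (q i)) (g (q (i + 1))) := by
      rw [← hv i hi.le, ← hv (i + 1) hi]
      exact ⟨(hF.inc i hi he).monotoneOn (hF.left_mem_piece hi) hxi hxi.1,
        (hF.inc i hi he).monotoneOn hxi (hF.right_mem_piece hi) hxi.2⟩
    obtain ⟨y, hy, hgy⟩ := intermediate_value_Icc hq hgc hfx
    exact ⟨y, i, hi, hxi, hy, hgy.symm⟩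
  · have hfx : f x ∈ Icc (g (q (i + 1))) (g (q i)) := by
      rw [← hv i hi.le, ← hv (i + 1) hi]
      exact ⟨(hF.dec i hi he).antitoneOn hxi (hF.right_mem_piece hi) hxi.2,
        (hF.dec i hi he).antitoneOn (hF.left_mem_piece hi) hxi hxi.1⟩
    obtain ⟨y, hy, hgy⟩ := intermediate_value_Icc' hq hgc hfx
    exact ⟨y, i, hi, hxi, hy, hgy.symm⟩

theorem Partner.lt (hF : MorseData f m p) (hG : MorseData g m q)
    (hv : ∀ i ≤ m, f (p i) = g (q i)) {x x' y y' : ℝ} (h : Partner f g m p q x y)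
    (h' : Partner f g m p q x' y') (hxx' : x < x') : y < y' := by
  obtain ⟨i, hi, hxi, hyi, hfg⟩ := h
  obtain ⟨i', hi', hxi', hyi', hfg'⟩ := h'
  rcases lt_trichotomy i i' with hlt | rfl | hgt
  · have hq : q (i + 1) ≤ q i' := hG.strictMonoOn.monotoneOn (mem_Iic.2 hi) (mem_Iic.2 hi'.le) hlt
    -- equal heights on consecutive pieces force `x = p (i + 1) = x'`
    refine (hyi.2.trans hq |>.trans hyi'.1).lt_of_ne fun hyy => ?_
    have hy : y = q (i + 1) := le_antisymm hyi.2 (hq.trans (hyy ▸ hyi'.1))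
    obtain rfl : i + 1 = i' := hG.strictMonoOn.injOn (mem_Iic.2 hi) (mem_Iic.2 hi'.le)
      (le_antisymm hq (hy ▸ hyy ▸ hyi'.1))
    have hfx : ∀ z, f z = g y → z ∈ Icc (p i) (p (i + 1)) ∪ Icc (p (i + 1)) (p (i + 2)) →
        z = p (i + 1) := by
      rintro z hz (hzi | hzi)
      · exact hF.injOn_piece hi hzi (hF.right_mem_piece hi) (hz.trans (hy ▸ (hv _ hi).symm))
      · exact hF.injOn_piece hi' hzi (hF.left_mem_piece hi') (hz.trans (hy ▸ (hv _ hi).symm))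
    exact hxx'.ne ((hfx x hfg (.inl hxi)).trans
      (hfx x' (hfg'.trans (congrArg g hyy.symm)) (.inr hxi')).symm)
  · by_cases he : Even i
    · exact ((hG.inc i hi he).lt_iff_lt hyi hyi').1 (hfg ▸ hfg' ▸ hF.inc i hi he hxi hxi' hxx')
    · exact ((hG.dec i hi he).lt_iff_gt hyi' hyi).1 (hfg ▸ hfg' ▸ hF.dec i hi he hxi hxi' hxx')
  · have hp : p (i' + 1) ≤ p i := hF.strictMonoOn.monotoneOn (mem_Iic.2 hi') (mem_Iic.2 hi.le) hgt
    exact absurd (hxi'.2.trans (hp.trans hxi.1)) (not_le.2 hxx')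

theorem graphEquiv (hF : MorseData f m p) (hG : MorseData g m q)
    (hv : ∀ i ≤ m, f (p i) = g (q i)) : GraphEquiv f g := by
  have hv' : ∀ i ≤ m, g (q i) = f (p i) := fun i hi => (hv i hi).symm
  have hlt : ∀ {x x' y y'}, Partner f g m p q x y → Partner f g m p q x' y' → (x < x' ↔ y < y') :=
    fun h h' => ⟨Partner.lt hF hG hv h h',
      Partner.lt hG hF hv' (partner_comm.1 h) (partner_comm.1 h')⟩
  have huniq : ∀ {x y y'}, Partner f g m p q x y → Partner f g m p q x y' → y = y' :=
    fun h h' => le_antisymm (not_lt.1 fun hlt' => lt_irrefl _ ((hlt h' h).2 hlt'))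
      (not_lt.1 fun hlt' => lt_irrefl _ ((hlt h h').2 hlt'))
  have hmem : ∀ {x y}, Partner f g m p q x y → x ∈ Icc (0 : ℝ) 1 ∧ y ∈ Icc (0 : ℝ) 1 :=
    fun ⟨i, hi, hx, hy, _⟩ => ⟨hF.Icc_subset hi.le hi hx, hG.Icc_subset hi.le hi hy⟩
  set φ := fun x => Classical.epsilon (Partner f g m p q x)
  have hφ : ∀ x ∈ Icc (0 : ℝ) 1, Partner f g m p q x (φ x) := fun x hx =>
    Classical.epsilon_spec (exists_partner hF hG hv hx)
  have hmono : StrictMonoOn φ (Icc 0 1) := fun x hx x' hx' =>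
    (hlt (hφ x hx) (hφ x' hx')).1
  have hmaps : MapsTo φ (Icc 0 1) (Icc 0 1) := fun x hx => (hmem (hφ x hx)).2
  have hsurj : SurjOn φ (Icc 0 1) (Icc 0 1) := fun y hy => by
    obtain ⟨x, hx⟩ := exists_partner hG hF hv' hy
    have hx01 := (hmem (partner_comm.2 hx)).1
    exact ⟨x, hx01, huniq (hφ x hx01) (partner_comm.2 hx)⟩
  refine ⟨φ, hmono.continuousOn_of_surjOn hmaps hsurj, hmono, hmaps, hsurj, fun x hx => ?_⟩
  obtain ⟨i, -, -, -, hfg⟩ := hφ x hx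
  exact hfg

end MorseData

theorem Nat.le_apply_of_even_step {σ : ℕ → ℕ} {m : ℕ} (hev : ∀ i ≤ m, Even i → Even (σ i))
    (hlt : ∀ i, i + 2 ≤ m → Even i → σ i < σ (i + 2)) {i : ℕ} (hi : i ≤ m) (he : Even i) :
    i ≤ σ i := by
  obtain ⟨u, rfl⟩ := he
  induction u with
  | zero => exact Nat.zero_le _
  | succ u ih =>
    have h := hlt (u + u) (by omega) ⟨u, rfl⟩
    obtain ⟨k, hk⟩ := hev (u + 1 + (u + 1)) hi ⟨u + 1, rfl⟩
    have := ih (by omega)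
    rw [show u + 1 + (u + 1) = u + u + 2 by ring] at hk ⊢
    omega

namespace SublevelCompEquiv

variable {f g : ℝ → ℝ} {m n : ℕ} {p q : ℕ → ℝ} {i i' : ℕ} {y y' : ℝ}

theorem exists_matches_min (Φ : SublevelCompEquiv f g) (hF : MorseData f m p)
    (hG : MorseData g n q) (hi : i ≤ m) (he : Even i) :
    ∃ j ≤ n, Even j ∧ g (q j) = f (p i) ∧ Φ.Matches (f (p i)) (p i) (q j) := by
  have hpi : p i ∈ sublevel f (f (p i)) := ⟨hF.mem_Icc hi, le_rfl⟩
  set D := Φ.equiv _ (.ofMem hpi)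
  have hD := Φ.forall_eq_of_forall_eq (.ofMem hpi) fun z hz => by
    rw [show (SublevelComp.ofMem hpi).1 = {p i} from hF.connectedComponentIn_min hi he] at hz
    rw [hz]
  obtain ⟨j, hj, hje, hDj⟩ := hG.exists_eq_singleton_of_forall_eq D.2 hD
  have hqj : q j ∈ D.1 := hDj ▸ rfl
  exact ⟨j, hj, hje, hD _ hqj, hpi, subset_of_mem_components D.2 hqj, (D.eq_ofMem_iff _).2 hqj⟩

theorem Matches.lt_of_min {Φ : SublevelCompEquiv f g} (hF : MorseData f m p) (hi' : i' ≤ m)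
    (he : Even i) (he' : Even i') (hii' : i < i') (h : Φ.Matches (f (p i)) (p i) y)
    (h' : Φ.Matches (f (p i')) (p i') y') : y < y' := by
  have hpp' := hF.lt hii' hi'
  refine (h.mono (le_max_left _ _)).lt_of_lt (h'.mono (le_max_right _ _)) hpp' fun heq => ?_
  rcases le_total (f (p i)) (f (p i')) with hle | hle
  · have hmem := heq ▸ mem_connectedComponentIn (h.mono (le_max_left _ _)).1
    rw [max_eq_right hle, hF.connectedComponentIn_min hi' he'] at hmem
    exact hpp'.ne hmem
  · have hmem := heq.symm ▸ mem_connectedComponentIn (h'.mono (le_max_right _ _)).1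
    rw [max_eq_left hle, hF.connectedComponentIn_min (hii'.le.trans hi') he] at hmem
    exact hpp'.ne' hmem

theorem exists_minIndexMap (Φ : SublevelCompEquiv f g) (hF : MorseData f m p)
    (hG : MorseData g n q) :
    ∃ σ : ℕ → ℕ, ∀ i ≤ m, Even i → σ i ≤ n ∧ Even (σ i) ∧ i ≤ σ i ∧ g (q (σ i)) = f (p i) ∧
      Φ.Matches (f (p i)) (p i) (q (σ i)) := by
  choose! σ hσn hσe hσv hσ using
    fun i (hi : i ≤ m) (he : Even i) => Φ.exists_matches_min hF hG hi he
  have hlt : ∀ i, i + 2 ≤ m → Even i → σ i < σ (i + 2) := fun i hi he =>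
    (hG.strictMonoOn.lt_iff_lt (mem_Iic.2 (hσn i (by omega) he))
      (mem_Iic.2 (hσn (i + 2) hi (he.add even_two)))).1
      ((hσ i (by omega) he).lt_of_min hF hi he (he.add even_two) (by omega)
        (hσ (i + 2) hi (he.add even_two)))
  exact ⟨σ, fun i hi he => ⟨hσn i hi he, hσe i hi he, Nat.le_apply_of_even_step hσe hlt hi he,
    hσv i hi he, hσ i hi he⟩⟩

theorem matches_min (Φ : SublevelCompEquiv f g) (hF : MorseData f m p) (hG : MorseData g n q) :
    m = n ∧ ∀ i ≤ m, Even i → g (q i) = f (p i) ∧ Φ.Matches (f (p i)) (p i) (q i) := by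
  obtain ⟨σ, hσ⟩ := Φ.exists_minIndexMap hF hG
  obtain ⟨τ, hτ⟩ := Φ.symm.exists_minIndexMap hG hF
  obtain rfl : m = n := le_antisymm ((hσ m le_rfl hF.even).2.2.1.trans (hσ m le_rfl hF.even).1)
    ((hτ n le_rfl hG.even).2.2.1.trans (hτ n le_rfl hG.even).1)
  refine ⟨rfl, fun i hi he => ?_⟩
  obtain ⟨hσm, hσe, hiσ, hσv, hσM⟩ := hσ i hi he
  obtain ⟨hτm, -, hστ, hτv, -⟩ := hτ (σ i) hσm hσe
  have hτσ : τ (σ i) = i := hF.injOn (mem_Iic.2 hτm) (mem_Iic.2 hi) (hτv.trans hσv)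
  have hσi : σ i = i := le_antisymm (hστ.trans hτσ.le) hiσ
  rw [hσi] at hσv hσM
  exact ⟨hσv, hσM⟩

theorem apply_max_le (Φ : SublevelCompEquiv f g) (hF : MorseData f m p) (hG : MorseData g m q)
    (hmin : ∀ i ≤ m, Even i → Φ.Matches (f (p i)) (p i) (q i)) (hi : i + 2 ≤ m) (he : Even i) :
    f (p (i + 1)) ≤ g (q (i + 1)) := by
  by_contra! hlt
  set t := max (max (f (p i)) (f (p (i + 2)))) (g (q (i + 1)))
  have ht : t < f (p (i + 1)) := max_lt (max_lt (hF.apply_lt_apply_succ (by omega) he)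
    (hF.apply_succ_lt_apply (by omega) (by simpa [Nat.even_add_one] using he))) hlt
  have h0 : Φ.Matches t (p i) (q i) :=
    (hmin i (by omega) he).mono ((le_max_left _ _).trans (le_max_left _ _))
  have h2 : Φ.Matches t (p (i + 2)) (q (i + 2)) :=
    (hmin (i + 2) hi (he.add even_two)).mono ((le_max_right _ _).trans (le_max_left _ _))
  have hcomp := (h0.connectedComponentIn_eq_iff h2).2
    (hG.connectedComponentIn_eq_of_max hi he (le_max_right _ _))
  have hmax : p (i + 1) ∈ connectedComponentIn (sublevel f t) (p i) :=
    ordConnected_connectedComponentIn.out (mem_connectedComponentIn h0.1)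
      (hcomp ▸ mem_connectedComponentIn h2.1) ⟨(hF.lt (by omega) (by omega)).le,
        (hF.lt (by omega) hi).le⟩
  exact ht.not_ge (connectedComponentIn_subset _ _ hmax).2

end SublevelCompEquiv

/-- two Morse-like functions on `[0,1]` with local minima at `0`
and `1` realizing the same valid chiral merge tree are graph-equivalent. -/
theorem same_cmt_implies_graph_equiv (f g : ℝ → ℝ) (hf : MorseLike f) (hg : MorseLike g)
    (hf0 : IsLocalMinOn f (Set.Icc 0 1) 0) (hf1 : IsLocalMinOn f (Set.Icc 0 1) 1)
    (hg0 : IsLocalMinOn g (Set.Icc 0 1) 0) (hg1 : IsLocalMinOn g (Set.Icc 0 1) 1)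
    (T : CMT) (hT : T.Valid) (hfT : RealizesCMT f T) (hgT : RealizesCMT g T) :
    GraphEquiv f g := by
  obtain ⟨m, p, hF⟩ := hf.exists_morseData hf0 hf1
  obtain ⟨n, q, hG⟩ := hg.exists_morseData hg0 hg1
  obtain ⟨Φ⟩ := RealizesCMT.nonempty_sublevelCompEquiv hT.2 hfT hgT
  obtain ⟨rfl, hmin⟩ := Φ.matches_min hF hG
  refine hF.graphEquiv hG fun i hi => ?_
  rcases Nat.even_or_odd i with he | ⟨k, rfl⟩
  · exact (hmin i hi he).1.symm
  · have hk : 2 * k + 2 ≤ m := by obtain ⟨r, hr⟩ := hF.even; omega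
    exact le_antisymm (Φ.apply_max_le hF hG (fun i hi he => (hmin i hi he).2) hk (even_two_mul k))
      (Φ.symm.apply_max_le hG hF (fun i hi he => (hmin i hi he).1 ▸ (hmin i hi he).2.symm) hk
        (even_two_mul k))
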